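/- Let x* ∈ X* be such that (Mp)(x*) := (M⁰p)(x*) = argmin(p − x*) is nonempty. Then the following are equivalent: (i) reverse strong robust duality holds at x*, i.e., the (attained) minimum of p − x* over X equals −q(x*) (equivalently p*(x*) = q(x*)); (ii) (Mp)(x*) = 𝒜(x*), where 𝒜(x*) := 𝒜⁰(x*) = ⋂_{η>0} ⋃_{u∈U, y_u*∈Y_u*} ⋃_{ε₁,ε₂≥0, ε₁+ε₂=η} {x ∈ J^{ε₁}(u) : (x, 0_u) ∈ (M^{ε₂}F_u)(x*, y_u*)}. -/

import Mathlib

/-!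
Weak duality `p* ≤ q` always holds, and `𝒜^ε(x*)` is exactly the set
`S^ε(x*) = {x : p x - x* x ≤ -q(x*) + ε}`: a point of `S^ε(x*)` is reached by choosing `(u, y*)`
with `F_u*(x*, y*)` within `η` of `q(x*)` and splitting the slack `p x - x* x + F_u*(x*, y*)` into
the activity gap `p x - F_u(x, 0)` and the minimization gap of `F_u - (x*, y*)` at `(x, 0)`.
On the other hand `argmin (p - x*) = {x : p x - x* x ≤ -p*(x*)}`, so when it is nonempty the two
sets agree exactly when `p*(x*) = q(x*)`.
-/

noncomputable section

namespace RobustDuality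

/-- The set of `ε`-minimizers of an extended-real-valued function `h`:
`{z | h z ∈ ℝ ∧ h z ≤ inf h + ε}` (empty when `inf h ∉ ℝ`). -/
def epsArgmin {Z : Type*} (h : Z → EReal) (ε : ℝ) : Set Z :=
  {z | (∃ r : ℝ, h z = (r : EReal)) ∧ h z ≤ (⨅ w, h w) + (ε : EReal)}

variable {X : Type*} [AddCommGroup X] [Module ℝ X] [TopologicalSpace X]
  [IsTopologicalAddGroup X] [ContinuousSMul ℝ X] [LocallyConvexSpace ℝ X] [T2Space X]

/-- `(M^ε h)(x*) := ε-argmin (h - x*)` for `h : X → EReal` and `x* ∈ X*`. -/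
def M1 (h : X → EReal) (ε : ℝ) (xs : X →L[ℝ] ℝ) : Set X :=
  epsArgmin (fun x => h x - ((xs x : ℝ) : EReal)) ε

/-- Fenchel conjugate of `h : X → EReal`. -/
def conj1 (h : X → EReal) (xs : X →L[ℝ] ℝ) : EReal :=
  ⨆ x : X, ((xs x : ℝ) : EReal) - h x

/-- `ε`-subdifferential of `h : X → EReal` at `a`. -/
def epsSubdiff1 (h : X → EReal) (ε : ℝ) (a : X) : Set (X →L[ℝ] ℝ) :=
  {xs | (∃ r : ℝ, h a = (r : EReal)) ∧
    ∀ x, h a + ((xs x - xs a - ε : ℝ) : EReal) ≤ h x}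

section Pair

variable {Yu : Type*} [AddCommGroup Yu] [Module ℝ Yu] [TopologicalSpace Yu]
  [IsTopologicalAddGroup Yu] [ContinuousSMul ℝ Yu] [LocallyConvexSpace ℝ Yu] [T2Space Yu]

/-- Fenchel conjugate of `F : X × Y → EReal` at `(x*, y*)`. -/
def conj2 (F : X × Yu → EReal) (xs : X →L[ℝ] ℝ) (ys : Yu →L[ℝ] ℝ) : EReal :=
  ⨆ z : X × Yu, ((xs z.1 + ys z.2 : ℝ) : EReal) - F z

/-- `(M^ε F)(x*, y*) := ε-argmin (F - (x*, y*))`. -/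
def M2 (F : X × Yu → EReal) (ε : ℝ) (xs : X →L[ℝ] ℝ) (ys : Yu →L[ℝ] ℝ) : Set (X × Yu) :=
  epsArgmin (fun z => F z - ((xs z.1 + ys z.2 : ℝ) : EReal)) ε

/-- `ε`-subdifferential of `F : X × Y → EReal` at `a`, as a set of dual pairs. -/
def epsSubdiff2 (F : X × Yu → EReal) (ε : ℝ) (a : X × Yu) :
    Set ((X →L[ℝ] ℝ) × (Yu →L[ℝ] ℝ)) :=
  {zs | (∃ r : ℝ, F a = (r : EReal)) ∧
    ∀ z, F a + ((zs.1 z.1 + zs.2 z.2 - zs.1 a.1 - zs.2 a.2 - ε : ℝ) : EReal) ≤ F z}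

end Pair

variable {U : Type*} {Y : U → Type*} [∀ u, AddCommGroup (Y u)] [∀ u, Module ℝ (Y u)]
  [∀ u, TopologicalSpace (Y u)] [∀ u, IsTopologicalAddGroup (Y u)]
  [∀ u, ContinuousSMul ℝ (Y u)] [∀ u, LocallyConvexSpace ℝ (Y u)] [∀ u, T2Space (Y u)]

/-- The robust objective `p := sup_{u ∈ U} F_u (·, 0_u)`. -/
def pRob (F : ∀ u, X × Y u → EReal) (x : X) : EReal := ⨆ u, F u (x, 0)

/-- `q := inf over u ∈ U and y* ∈ Y_u* of F_u*(·, y*)`. -/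
def qRob (F : ∀ u, X × Y u → EReal) (xs : X →L[ℝ] ℝ) : EReal :=
  ⨅ (u : U) (ys : Y u →L[ℝ] ℝ), conj2 (F u) xs ys

/-- `S^ε(x*) := {x : p x ∈ ℝ ∧ p x - ⟨x*, x⟩ ≤ -q x* + ε}`. -/
def Sset (F : ∀ u, X × Y u → EReal) (ε : ℝ) (xs : X →L[ℝ] ℝ) : Set X :=
  {x | (∃ r : ℝ, pRob F x = (r : EReal)) ∧
    pRob F x - ((xs x : ℝ) : EReal) ≤ -qRob F xs + (ε : EReal)}

/-- `J^ε(u) := {x : p x ∈ ℝ ∧ p x ≤ F_u(x, 0) + ε}`. -/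
def Jset (F : ∀ u, X × Y u → EReal) (ε : ℝ) (u : U) : Set X :=
  {x | (∃ r : ℝ, pRob F x = (r : EReal)) ∧ pRob F x ≤ F u (x, 0) + (ε : EReal)}

/-- `A^{(ε₁,ε₂)}_{(u,y*)}(x*) := {x ∈ J^{ε₁}(u) : (x, 0) ∈ (M^{ε₂}F_u)(x*, y*)}`. -/
def Aset (F : ∀ u, X × Y u → EReal) (ε₁ ε₂ : ℝ) (u : U) (ys : Y u →L[ℝ] ℝ)
    (xs : X →L[ℝ] ℝ) : Set X :=
  {x | x ∈ Jset F ε₁ u ∧ (x, (0 : Y u)) ∈ M2 (F u) ε₂ xs ys}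

/-- `𝒜^ε(x*)`. -/
def calA (F : ∀ u, X × Y u → EReal) (ε : ℝ) (xs : X →L[ℝ] ℝ) : Set X :=
  ⋂ (η : ℝ) (_ : 0 < η),
    ⋃ (u : U) (ys : Y u →L[ℝ] ℝ) (ε₁ : ℝ) (ε₂ : ℝ)
      (_ : 0 ≤ ε₁) (_ : 0 ≤ ε₂) (_ : ε₁ + ε₂ = ε + η), Aset F ε₁ ε₂ u ys xs

/-- `B^ε_{(u,y*)}(x*)`. -/
def Bset (F : ∀ u, X × Y u → EReal) (ε : ℝ) (u : U) (ys : Y u →L[ℝ] ℝ)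
    (xs : X →L[ℝ] ℝ) : Set X :=
  ⋃ (ε₁ : ℝ) (ε₂ : ℝ) (_ : 0 ≤ ε₁) (_ : 0 ≤ ε₂) (_ : ε₁ + ε₂ = ε),
    Aset F ε₁ ε₂ u ys xs

/-- `B^ε(x*) := ⋃_{u, y*} B^ε_{(u,y*)}(x*)`. -/
def BsetAll (F : ∀ u, X × Y u → EReal) (ε : ℝ) (xs : X →L[ℝ] ℝ) : Set X :=
  ⋃ (u : U) (ys : Y u →L[ℝ] ℝ), Bset F ε u ys xs

/-- `I^ε(x)`: the set of `ε`-active indices at `x`. -/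
def Iset (F : ∀ u, X × Y u → EReal) (ε : ℝ) (x : X) : Set U :=
  {u | (∃ r : ℝ, pRob F x = (r : EReal)) ∧ pRob F x - (ε : EReal) ≤ F u (x, 0)}

/-- `C^ε(x)`. -/
def Cset (F : ∀ u, X × Y u → EReal) (ε : ℝ) (x : X) : Set (X →L[ℝ] ℝ) :=
  ⋂ (η : ℝ) (_ : 0 < η),
    ⋃ (ε₁ : ℝ) (ε₂ : ℝ) (_ : 0 ≤ ε₁) (_ : 0 ≤ ε₂) (_ : ε₁ + ε₂ = ε + η)
      (u : U) (_ : u ∈ Iset F ε₁ x),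
      Prod.fst '' epsSubdiff2 (F u) ε₂ (x, (0 : Y u))

/-- `D^ε(x)`. -/
def Dset (F : ∀ u, X × Y u → EReal) (ε : ℝ) (x : X) : Set (X →L[ℝ] ℝ) :=
  ⋃ (ε₁ : ℝ) (ε₂ : ℝ) (_ : 0 ≤ ε₁) (_ : 0 ≤ ε₂) (_ : ε₁ + ε₂ = ε)
    (u : U) (_ : u ∈ Iset F ε₁ x),
    Prod.fst '' epsSubdiff2 (F u) ε₂ (x, (0 : Y u))

/-- The exact active index set `I(x) := {u : F_u(x,0) = p(x)}` (when `p(x) ∈ ℝ`). -/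
def I0set (F : ∀ u, X × Y u → EReal) (x : X) : Set U :=
  {u | (∃ r : ℝ, pRob F x = (r : EReal)) ∧ F u (x, 0) = pRob F x}

/-- `D(x) := ⋃_{u ∈ I(x)} proj_{X*} ∂F_u(x, 0)`. -/
def D0set (F : ∀ u, X × Y u → EReal) (x : X) : Set (X →L[ℝ] ℝ) :=
  ⋃ (u : U) (_ : u ∈ I0set F x), Prod.fst '' epsSubdiff2 (F u) 0 (x, (0 : Y u))

/-- `B_{(u,y*)}(x*) := {x ∈ J(u) : (x, 0) ∈ (M F_u)(x*, y*)}`. -/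
def B0set (F : ∀ u, X × Y u → EReal) (u : U) (ys : Y u →L[ℝ] ℝ)
    (xs : X →L[ℝ] ℝ) : Set X :=
  {x | (∃ r : ℝ, pRob F x = (r : EReal)) ∧ F u (x, 0) = pRob F x ∧
    (x, (0 : Y u)) ∈ M2 (F u) 0 xs ys}

set_option linter.unusedSectionVars false

theorem _root_.EReal.iSup_neg {ι : Sort*} (f : ι → EReal) : ⨆ i, -f i = -⨅ i, f i :=
  (EReal.negOrderIso.map_iInf f).symm

theorem _root_.EReal.le_of_forall_pos_le_add_coe {a b : EReal} (h : ∀ η : ℝ, 0 < η → a ≤ b + η) :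
    a ≤ b := by
  induction b with
  | bot => simpa using h 1 one_pos
  | coe r =>
    refine EReal.le_of_forall_lt_iff_le.1 fun z hz => ?_
    have hrz : r < z := by exact_mod_cast hz
    have hz' := h (z - r) (sub_pos.2 hrz)
    rwa [← EReal.coe_add, add_sub_cancel] at hz'
  | top => exact le_top

theorem _root_.EReal.exists_coe_sub_coe_iff {a : EReal} {c : ℝ} :
    (∃ r : ℝ, a - c = r) ↔ ∃ r : ℝ, a = r := by
  induction a with
  | bot => simp [EReal.bot_sub]
  | coe t => exact ⟨fun _ => ⟨t, rfl⟩, fun _ => ⟨t - c, rfl⟩⟩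
  | top => simp

theorem _root_.EReal.coe_le_neg_add_coe_iff {q : EReal} {a ε : ℝ} :
    (a : EReal) ≤ -q + ε ↔ q ≤ ((ε - a : ℝ) : EReal) := by
  induction q with
  | bot => simp
  | coe t =>
    rw [← EReal.coe_neg, ← EReal.coe_add, EReal.coe_le_coe_iff, EReal.coe_le_coe_iff]
    constructor <;> intro <;> linarith
  | top => simpa using (EReal.coe_lt_top (ε - a)).ne

theorem conj1_eq_neg_iInf (h : X → EReal) (xs : X →L[ℝ] ℝ) :
    conj1 h xs = -⨅ x, (h x - xs x) := by
  rw [← EReal.iSup_neg]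
  refine iSup_congr fun x => ?_
  rw [EReal.neg_sub (Or.inr (EReal.coe_ne_bot _)) (Or.inr (EReal.coe_ne_top _)),
    sub_eq_add_neg, add_comm]

theorem neg_conj1_le (h : X → EReal) (xs : X →L[ℝ] ℝ) (x : X) :
    -conj1 h xs ≤ h x - xs x := by
  rw [conj1_eq_neg_iInf, neg_neg]
  exact iInf_le _ x

theorem mem_M1_iff {h : X → EReal} {ε : ℝ} {xs : X →L[ℝ] ℝ} {x : X} :
    x ∈ M1 h ε xs ↔ (∃ r : ℝ, h x = r) ∧ h x - xs x ≤ -conj1 h xs + ε := by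
  simp only [M1, epsArgmin, Set.mem_ofPred_eq]
  rw [conj1_eq_neg_iInf, neg_neg, EReal.exists_coe_sub_coe_iff]

section Pair

variable {Yu : Type*} [AddCommGroup Yu] [Module ℝ Yu] [TopologicalSpace Yu]
  [IsTopologicalAddGroup Yu] [ContinuousSMul ℝ Yu] [LocallyConvexSpace ℝ Yu] [T2Space Yu]

theorem conj2_eq_neg_iInf (G : X × Yu → EReal) (xs : X →L[ℝ] ℝ) (ys : Yu →L[ℝ] ℝ) :
    conj2 G xs ys = -⨅ z : X × Yu, (G z - ((xs z.1 + ys z.2 : ℝ) : EReal)) := by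
  rw [← EReal.iSup_neg]
  refine iSup_congr fun z => ?_
  rw [EReal.neg_sub (Or.inr (EReal.coe_ne_bot _)) (Or.inr (EReal.coe_ne_top _)),
    sub_eq_add_neg, add_comm]

theorem sub_le_conj2 (G : X × Yu → EReal) (xs : X →L[ℝ] ℝ) (ys : Yu →L[ℝ] ℝ) (x : X) :
    xs x - G (x, 0) ≤ conj2 G xs ys :=
  le_iSup_of_le (x, 0) (by simp)

theorem mem_M2_zero_iff {G : X × Yu → EReal} {ε : ℝ} {xs : X →L[ℝ] ℝ} {ys : Yu →L[ℝ] ℝ}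
    {x : X} : (x, (0 : Yu)) ∈ M2 G ε xs ys ↔
      (∃ r : ℝ, G (x, 0) = r) ∧ G (x, 0) - xs x ≤ -conj2 G xs ys + ε := by
  simp only [M2, epsArgmin, Set.mem_ofPred_eq, map_zero, add_zero]
  rw [conj2_eq_neg_iInf, neg_neg, EReal.exists_coe_sub_coe_iff]

end Pair

theorem le_pRob (F : ∀ u, X × Y u → EReal) (x : X) (u : U) : F u (x, 0) ≤ pRob F x :=
  le_iSup (fun u => F u (x, 0)) u

theorem qRob_le_conj2 (F : ∀ u, X × Y u → EReal) (xs : X →L[ℝ] ℝ) (u : U)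
    (ys : Y u →L[ℝ] ℝ) : qRob F xs ≤ conj2 (F u) xs ys :=
  iInf_le_of_le u (iInf_le _ ys)

theorem conj1_pRob_le_qRob (F : ∀ u, X × Y u → EReal) (xs : X →L[ℝ] ℝ) :
    conj1 (pRob F) xs ≤ qRob F xs := by
  refine le_iInf fun u => le_iInf fun ys => iSup_le fun x => ?_
  exact (EReal.sub_le_sub le_rfl (le_pRob F x u)).trans (sub_le_conj2 (F u) xs ys x)

theorem Aset_subset_Sset (F : ∀ u, X × Y u → EReal) (ε₁ ε₂ : ℝ) (u : U)
    (ys : Y u →L[ℝ] ℝ) (xs : X →L[ℝ] ℝ) : Aset F ε₁ ε₂ u ys xs ⊆ Sset F (ε₁ + ε₂) xs := by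
  rintro x ⟨⟨⟨r, hr⟩, hJ⟩, hM⟩
  obtain ⟨⟨a, ha⟩, hgap⟩ := mem_M2_zero_iff.1 hM
  rw [hr, ha, ← EReal.coe_add, EReal.coe_le_coe_iff] at hJ
  rw [ha, ← EReal.coe_sub, EReal.coe_le_neg_add_coe_iff] at hgap
  refine ⟨⟨r, hr⟩, ?_⟩
  rw [hr, ← EReal.coe_sub, EReal.coe_le_neg_add_coe_iff]
  exact (qRob_le_conj2 F xs u ys).trans (hgap.trans (EReal.coe_le_coe_iff.2 (by linarith)))

theorem mem_Sset_of_forall_pos {F : ∀ u, X × Y u → EReal} {ε : ℝ} {xs : X →L[ℝ] ℝ} {x : X}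
    (h : ∀ η : ℝ, 0 < η → x ∈ Sset F (ε + η) xs) : x ∈ Sset F ε xs := by
  refine ⟨(h 1 one_pos).1, EReal.le_of_forall_pos_le_add_coe fun η hη => ?_⟩
  rw [add_assoc, ← EReal.coe_add]
  exact (h η hη).2

theorem calA_subset_Sset (F : ∀ u, X × Y u → EReal) (ε : ℝ) (xs : X →L[ℝ] ℝ) :
    calA F ε xs ⊆ Sset F ε xs := by
  intro x hx
  simp only [calA, Set.mem_iInter, Set.mem_iUnion] at hx
  refine mem_Sset_of_forall_pos fun η hη => ?_
  obtain ⟨u, ys, ε₁, ε₂, -, -, hsum, hA⟩ := hx η hη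
  exact hsum ▸ Aset_subset_Sset F ε₁ ε₂ u ys xs hA

theorem Sset_subset_calA (F : ∀ u, X × Y u → EReal) (ε : ℝ) (xs : X →L[ℝ] ℝ) :
    Sset F ε xs ⊆ calA F ε xs := by
  rintro x ⟨⟨r, hr⟩, hS⟩
  simp only [calA, Set.mem_iInter, Set.mem_iUnion]
  intro η hη
  rw [hr, ← EReal.coe_sub, EReal.coe_le_neg_add_coe_iff] at hS
  have hq : qRob F xs < ((ε - (r - xs x) + η : ℝ) : EReal) :=
    hS.trans_lt (EReal.coe_lt_coe_iff.2 (by linarith))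
  obtain ⟨u, hu⟩ := iInf_lt_iff.1 hq
  obtain ⟨ys, hc⟩ := iInf_lt_iff.1 hu
  have hlow := sub_le_conj2 (F u) xs ys x
  have hup : F u (x, 0) ≤ r := hr ▸ le_pRob F x u
  obtain ⟨a, ha⟩ : ∃ a : ℝ, F u (x, 0) = a := by
    refine ⟨(F u (x, 0)).toReal, (EReal.coe_toReal ?_ ?_).symm⟩
    · exact ne_top_of_le_ne_top (EReal.coe_ne_top r) hup
    · intro hbot
      rw [hbot, EReal.coe_sub_bot] at hlow
      exact not_top_lt (hlow.trans_lt hc)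
  rw [ha, ← EReal.coe_sub] at hlow
  obtain ⟨c, hc'⟩ : ∃ c : ℝ, conj2 (F u) xs ys = c :=
    ⟨_, (EReal.coe_toReal (ne_top_of_lt hc) (ne_bot_of_le_ne_bot (EReal.coe_ne_bot _) hlow)).symm⟩
  rw [hc', EReal.coe_lt_coe_iff] at hc
  rw [hc', EReal.coe_le_coe_iff] at hlow
  rw [ha, EReal.coe_le_coe_iff] at hup
  -- `ε₂` is the exact gap of `F_u - (x*, y*)` at `(x, 0)`; `ε₁` takes the rest of `ε + η`.
  refine ⟨u, ys, ε + η - (a - xs x + c), a - xs x + c, by linarith, by linarith, by ring,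
    ⟨⟨r, hr⟩, ?_⟩, mem_M2_zero_iff.2 ⟨⟨a, ha⟩, ?_⟩⟩
  · rw [hr, ha, ← EReal.coe_add, EReal.coe_le_coe_iff]
    linarith
  · rw [ha, hc', ← EReal.coe_sub, EReal.coe_le_neg_add_coe_iff, EReal.coe_le_coe_iff]
    linarith

theorem calA_eq_Sset (F : ∀ u, X × Y u → EReal) (ε : ℝ) (xs : X →L[ℝ] ℝ) :
    calA F ε xs = Sset F ε xs :=
  (calA_subset_Sset F ε xs).antisymm (Sset_subset_calA F ε xs)

theorem M1_pRob_eq_Sset_iff {F : ∀ u, X × Y u → EReal} {xs : X →L[ℝ] ℝ}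
    (hM : (M1 (pRob F) 0 xs).Nonempty) :
    M1 (pRob F) 0 xs = Sset F 0 xs ↔ conj1 (pRob F) xs = qRob F xs := by
  refine ⟨fun hEq => ?_, fun hEq => Set.ext fun x => by rw [mem_M1_iff, hEq]; rfl⟩
  obtain ⟨x, hx⟩ := hM
  have hxS : pRob F x - xs x ≤ -qRob F xs + (0 : ℝ) := (hEq ▸ hx).2
  rw [EReal.coe_zero, add_zero] at hxS
  exact (conj1_pRob_le_qRob F xs).antisymm
    (EReal.neg_le_neg_iff.1 ((neg_conj1_le (pRob F) xs x).trans hxS))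

theorem reverse_strong_robust_duality_iff_general
    (F : ∀ u, X × Y u → EReal)
    (xs : X →L[ℝ] ℝ) (hM : (M1 (pRob F) 0 xs).Nonempty) :
    conj1 (pRob F) xs = qRob F xs ↔ M1 (pRob F) 0 xs = calA F 0 xs := by
  rw [calA_eq_Sset, M1_pRob_eq_Sset_iff hM]

/-- Theorem 5.1 (reverse strong robust duality). -/
theorem reverse_strong_robust_duality_iff
    (F : ∀ u, X × Y u → EReal) (hU : Nonempty U) (hF : ∀ u z, F u z ≠ ⊥)
    (xs : X →L[ℝ] ℝ) (hM : (M1 (pRob F) 0 xs).Nonempty) :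
    conj1 (pRob F) xs = qRob F xs ↔ M1 (pRob F) 0 xs = calA F 0 xs :=
  reverse_strong_robust_duality_iff_general F xs hM

end RobustDuality
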